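/- arXiv:1305.5859 — 9 statements merged into one kernel-verified Lean document; each statement's English description precedes it below -/
import Mathlib

section
/- Let G : U →L[ℝ] Y and K : Y →L[ℝ] U with I - GK invertible, and define h_G(K) = -K(I - GK)⁻¹. Then I - G·h_G(K) is invertible, and h_G(h_G(K)) = K; i.e., h_G is an involution on its domain. -/
/-! Writing `T = 1 - GK`, the identity `GK = 1 - T` gives `1 - G·h_G(K) = 1 + (1 - T)T⁻¹ = T⁻¹`,
so `h_G(h_G(K)) = K T⁻¹ T = K`. -/

namespace ContinuousLinearMap

variable {R M N : Type*} [Ring R] [TopologicalSpace M] [AddCommGroup M] [IsTopologicalAddGroup M]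
  [Module R M] [TopologicalSpace N] [AddCommGroup N] [IsTopologicalAddGroup N] [Module R N]

theorem one_sub_comp_neg_comp_ringInverse (G : M →L[R] N) (K : N →L[R] M)
    (h : IsUnit (1 - G ∘L K)) :
    1 - G ∘L (-(K ∘L Ring.inverse (1 - G ∘L K))) = Ring.inverse (1 - G ∘L K) := by
  set T : N →L[R] N := 1 - G ∘L K
  have hGK : G ∘L K = 1 - T := by simp only [T, sub_sub_cancel]
  calc 1 - G ∘L (-(K ∘L Ring.inverse T))
      = 1 + (1 - T) * Ring.inverse T := by rw [comp_neg, ← comp_assoc, hGK, sub_neg_eq_add]; rfl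
    _ = Ring.inverse T := by rw [sub_mul, one_mul, Ring.mul_inverse_cancel T h, add_sub_cancel]

end ContinuousLinearMap

theorem stmt_1_general {U Y : Type*} [NormedAddCommGroup U] [NormedSpace ℝ U]
    [NormedAddCommGroup Y] [NormedSpace ℝ Y]
    (G : U →L[ℝ] Y) (K : Y →L[ℝ] U) (h : IsUnit (1 - G ∘L K))
    (hGK : Y →L[ℝ] U) (hdef : hGK = -(K ∘L Ring.inverse (1 - G ∘L K))) :
    IsUnit (1 - G ∘L hGK) ∧ -(hGK ∘L Ring.inverse (1 - G ∘L hGK)) = K := by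
  subst hdef
  rw [ContinuousLinearMap.one_sub_comp_neg_comp_ringInverse G K h, Ring.inverse_inverse h]
  refine ⟨h.ringInverse, ?_⟩
  rw [ContinuousLinearMap.neg_comp, neg_neg, ContinuousLinearMap.comp_assoc]
  exact congrArg (K ∘L ·) (Ring.inverse_mul_cancel _ h) |>.trans (ContinuousLinearMap.comp_id K)

/-- `h_G` is an involution on its domain: if `I - GK` is invertible and
`h_G(K) = -K(I-GK)⁻¹`, then `I - G·h_G(K)` is invertible and `h_G(h_G(K)) = K`. -/
theorem stmt_1 {U Y : Type*} [NormedAddCommGroup U] [NormedSpace ℝ U] [CompleteSpace U]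
    [NormedAddCommGroup Y] [NormedSpace ℝ Y] [CompleteSpace Y]
    (G : U →L[ℝ] Y) (K : Y →L[ℝ] U) (h : IsUnit (1 - G ∘L K))
    (hGK : Y →L[ℝ] U) (hdef : hGK = -(K ∘L Ring.inverse (1 - G ∘L K))) :
    IsUnit (1 - G ∘L hGK) ∧ -(hGK ∘L Ring.inverse (1 - G ∘L hGK)) = K :=
  stmt_1_general G K h hGK hdef
end

section
/- Let G : U →L[ℝ] Y and K : Y →L[ℝ] U with I - GK invertible, and α ∈ ℝ such that I - (1-α)GK is invertible. Then α·h_G(K) lies in the domain of h_G (i.e., I - G(α h_G(K)) is invertible), and h_G(α·h_G(K)) = α·K·(I - (1-α)GK)⁻¹. -/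
/-!
Writing `r = (1 - GK)⁻¹`, the identity `r = 1 + GK r` gives
`1 - G(α h_G(K)) = 1 + α GK r = (1 - (1 - α)GK) r`, a product of units. Its inverse is
`(1 - GK)(1 - (1 - α)GK)⁻¹`, whose left factor cancels the `r` inside `h_G(K) = -K r`.
-/

section

variable {R A : Type*} [CommRing R] [Ring A] [Algebra R A]

theorem one_add_smul_mul_ringInverse_one_sub {a : A} (ha : IsUnit (1 - a)) (c : R) :
    1 + c • (a * Ring.inverse (1 - a)) = (1 - (1 - c) • a) * Ring.inverse (1 - a) := by
  set r := Ring.inverse (1 - a)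
  have hr : r - a * r = 1 := by rw [← one_sub_mul, Ring.mul_inverse_cancel _ ha]
  rw [sub_mul, one_mul, smul_mul_assoc, sub_smul, one_smul, ← hr]
  abel

end

theorem stmt_3_general {U Y : Type*} [NormedAddCommGroup U] [NormedSpace ℝ U]
    [NormedAddCommGroup Y] [NormedSpace ℝ Y]
    (G : U →L[ℝ] Y) (K : Y →L[ℝ] U) (α : ℝ)
    (h : IsUnit (1 - G ∘L K)) (hα : IsUnit (1 - (1 - α) • (G ∘L K)))
    (hGK : Y →L[ℝ] U) (hdef : hGK = -(K ∘L Ring.inverse (1 - G ∘L K))) :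
    IsUnit (1 - G ∘L (α • hGK)) ∧
      -((α • hGK) ∘L Ring.inverse (1 - G ∘L (α • hGK))) =
        α • (K ∘L Ring.inverse (1 - (1 - α) • (G ∘L K))) := by
  have hcomp : 1 - G ∘L (α • hGK) = 1 + α • (G ∘L K * Ring.inverse (1 - G ∘L K)) := by
    subst hdef
    ext
    simp
  rw [hcomp, one_add_smul_mul_ringInverse_one_sub h]
  refine ⟨hα.mul h.ringInverse, ?_⟩
  rw [Ring.inverse_mul (Or.inr h.ringInverse), Ring.inverse_inverse h, hdef, smul_neg,
    ContinuousLinearMap.neg_comp, neg_neg, ContinuousLinearMap.smul_comp,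
    ContinuousLinearMap.comp_assoc]
  congr 2
  exact Ring.inverse_mul_cancel_left _ _ h

/-- If `I - GK` and `I - (1-α)GK` are invertible, then `α·h_G(K)` lies in the
domain of `h_G`, and `h_G(α·h_G(K)) = α·K·(I - (1-α)GK)⁻¹`. -/
theorem stmt_3 {U Y : Type*} [NormedAddCommGroup U] [NormedSpace ℝ U] [CompleteSpace U]
    [NormedAddCommGroup Y] [NormedSpace ℝ Y] [CompleteSpace Y]
    (G : U →L[ℝ] Y) (K : Y →L[ℝ] U) (α : ℝ)
    (h : IsUnit (1 - G ∘L K)) (hα : IsUnit (1 - (1 - α) • (G ∘L K)))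
    (hGK : Y →L[ℝ] U) (hdef : hGK = -(K ∘L Ring.inverse (1 - G ∘L K))) :
    IsUnit (1 - G ∘L (α • hGK)) ∧
      -((α • hGK) ∘L Ring.inverse (1 - G ∘L (α • hGK))) =
        α • (K ∘L Ring.inverse (1 - (1 - α) • (G ∘L K))) :=
  stmt_3_general G K α h hα hGK hdef
end

section
/- Let U, Y be Banach spaces, G ∈ L(U,Y), and let S ⊆ L(Y,U) be a closed homogeneous set. Define M_G = {K : I - GK invertible} and h_G(K) = -K(I-GK)⁻¹. Assume that for every K ∈ S ∩ M_G and every α ∈ [0,1], if α·h_G(K) ∈ M_G then h_G(α·h_G(K)) ∈ S ∩ M_G (this holds, e.g., when h_G(S ∩ M_G) = T ∩ M_G for a star-shaped set T). Then h_G(K) ∈ S for every K ∈ S ∩ M_G. -/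
/-- Key step of Theorem 3: if `S` is closed and homogeneous and, for every
`K ∈ S ∩ M_G` and `α ∈ [0,1]`, `α·h_G(K) ∈ M_G` implies
`h_G(α·h_G(K)) ∈ S ∩ M_G`, then `h_G(K) ∈ S` for every `K ∈ S ∩ M_G`. -/
theorem stmt_9 {U Y : Type*} [NormedAddCommGroup U] [NormedSpace ℝ U] [CompleteSpace U]
    [NormedAddCommGroup Y] [NormedSpace ℝ Y] [CompleteSpace Y]
    (G : U →L[ℝ] Y) (S : Set (Y →L[ℝ] U))
    (hSclosed : IsClosed S)
    (hShom : ∀ K ∈ S, ∀ α : ℝ, α • K ∈ S)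
    (MG : Set (Y →L[ℝ] U)) (hMG : MG = {K | IsUnit (1 - G ∘L K)})
    (hG : (Y →L[ℝ] U) → (Y →L[ℝ] U))
    (hhG : hG = fun K => -(K ∘L Ring.inverse (1 - G ∘L K)))
    (hyp : ∀ K ∈ S ∩ MG, ∀ α ∈ Set.Icc (0 : ℝ) 1,
        α • hG K ∈ MG → hG (α • hG K) ∈ S ∩ MG) :
    ∀ K ∈ S ∩ MG, hG K ∈ S := by
  rintro K hK
  set H : Y →L[ℝ] U := hG K with hH
  set φ : ℝ → (Y →L[ℝ] Y) := fun α => 1 - α • (G ∘L H) with hφ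
  have hφcont : Continuous φ := by
    apply Continuous.sub continuous_const
    exact continuous_id.smul continuous_const
  have hφ0 : φ 0 = 1 := by simp [hφ]
  set f : ℝ → (Y →L[ℝ] U) := fun α => -(H ∘L Ring.inverse (φ α)) with hf
  have hcontinv : ContinuousAt (Ring.inverse : (Y →L[ℝ] Y) → _) (φ 0) := by
    rw [hφ0]
    exact NormedRing.inverse_continuousAt (1 : (Y →L[ℝ] Y)ˣ)
  have hcontf : ContinuousAt f 0 := by
    apply ContinuousAt.neg
    exact ((ContinuousLinearMap.compL ℝ Y Y U H).continuous.continuousAt.comp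
      hcontinv).comp hφcont.continuousAt
  have hf0 : f 0 = -H := by
    show -(H ∘L Ring.inverse (φ 0)) = -H
    rw [hφ0, Ring.inverse_one, ContinuousLinearMap.one_def,
      ContinuousLinearMap.comp_id]
  -- eventually in 𝓝[>] 0, f α ∈ S
  have hevU : ∀ᶠ α in nhdsWithin (0:ℝ) (Set.Ioi 0), IsUnit (φ α) := by
    apply Filter.Eventually.filter_mono nhdsWithin_le_nhds
    have : {x : Y →L[ℝ] Y | IsUnit x} ∈ nhds (φ 0) :=
      Units.isOpen.mem_nhds (by rw [hφ0]; exact isUnit_one)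
    exact hφcont.continuousAt.eventually_mem this
  have hevI : ∀ᶠ α in nhdsWithin (0:ℝ) (Set.Ioi 0), α ∈ Set.Ioo (0:ℝ) 1 := by
    apply Filter.Eventually.and
    · exact eventually_mem_nhdsWithin
    · exact Filter.Eventually.filter_mono nhdsWithin_le_nhds
        (Filter.Tendsto.eventually_lt_const one_pos Filter.tendsto_id)
  have hev : ∀ᶠ α in nhdsWithin (0:ℝ) (Set.Ioi 0), f α ∈ S := by
    filter_upwards [hevU, hevI] with α hUnit hIoo
    have hα0 : (0:ℝ) < α := hIoo.1
    have hαne : α ≠ 0 := ne_of_gt hα0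
    -- α • H ∈ MG
    have hcompsmul : G ∘L (α • H) = α • (G ∘L H) := by
      ext y; simp
    have hMGmem : α • H ∈ MG := by
      rw [hMG]
      show IsUnit (1 - G ∘L (α • H))
      rw [hcompsmul]
      exact hUnit
    have hmem : hG (α • H) ∈ S ∩ MG :=
      hyp K hK α ⟨le_of_lt hα0, le_of_lt hIoo.2⟩ (hH ▸ hMGmem)
    -- compute α⁻¹ • hG (α • H) = f α
    have hval : α⁻¹ • hG (α • H) = f α := by
      rw [hhG]
      simp only []
      rw [hcompsmul]
      have : (α • H) ∘L Ring.inverse (1 - α • (G ∘L H))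
          = α • (H ∘L Ring.inverse (1 - α • (G ∘L H))) := by
        ext y; simp
      rw [this, smul_neg, smul_smul, inv_mul_cancel₀ hαne, one_smul]
    have := hShom _ hmem.1 α⁻¹
    rwa [hval] at this
  have hne : (nhdsWithin (0:ℝ) (Set.Ioi 0)).NeBot := by infer_instance
  have htend : Filter.Tendsto f (nhdsWithin (0:ℝ) (Set.Ioi 0)) (nhds (f 0)) :=
    hcontf.continuousWithinAt
  have hnegH : -H ∈ S := hf0 ▸ hSclosed.mem_of_tendsto htend hev
  have := hShom _ hnegH (-1)
  simpa using this
end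

section
/- Let U, Y be Banach spaces, G ∈ L(U,Y), and S ⊆ L(Y,U) a closed homogeneous set. If h_G(S ∩ M_G) = T ∩ M_G for some star-shaped set T ⊆ L(Y,U), then h_G(S ∩ M_G) = S ∩ M_G. -/
/-!
Since `h_G` is an involution of `M_G`, a subset of `M_G` that `h_G` maps into itself is mapped
onto itself, so it suffices to show `T ⊆ S`. For `J ∈ T` and small
`α > 0`, star-shapedness puts `α J` in `T ∩ M_G = h_G(S ∩ M_G)`, whence `h_G(α J) ∈ S`, and by
homogeneity `α⁻¹ h_G(α J) = -J (I - α G J)⁻¹ ∈ S`. Letting `α → 0⁺` and using that `S` is closed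
gives `-J ∈ S`, hence `J ∈ S`.
-/

open ContinuousLinearMap Set Filter Topology

section Feedback

variable {𝕜 U Y : Type*} [NontriviallyNormedField 𝕜]
  [NormedAddCommGroup U] [NormedSpace 𝕜 U] [NormedAddCommGroup Y] [NormedSpace 𝕜 Y]

/-- The paper's `M_G`. -/
def wellPosed (G : U →L[𝕜] Y) : Set (Y →L[𝕜] U) := {K | IsUnit (1 - G ∘L K)}

/-- The paper's `h_G`; `Ring.inverse` is the junk value `0` off `wellPosed G`. -/
noncomputable def closedLoopMap (G : U →L[𝕜] Y) (K : Y →L[𝕜] U) : Y →L[𝕜] U :=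
  -(K ∘L Ring.inverse (1 - G ∘L K))

variable {G : U →L[𝕜] Y} {K : Y →L[𝕜] U}

lemma one_sub_comp_closedLoopMap (hK : K ∈ wellPosed G) :
    1 - G ∘L closedLoopMap G K = Ring.inverse (1 - G ∘L K) := by
  rw [closedLoopMap]
  set u := 1 - G ∘L K
  have hGK : G ∘L K = 1 - u := (sub_sub_cancel _ _).symm
  rw [comp_neg, ← comp_assoc, hGK, ← mul_def, sub_neg_eq_add, sub_mul, one_mul,
    Ring.mul_inverse_cancel u hK, add_sub_cancel]

lemma closedLoopMap_closedLoopMap (hK : K ∈ wellPosed G) :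
    closedLoopMap G (closedLoopMap G K) = K := by
  obtain ⟨u, hu⟩ := hK
  rw [closedLoopMap, one_sub_comp_closedLoopMap ⟨u, hu⟩, closedLoopMap, ← hu, Ring.inverse_unit,
    Ring.inverse_unit, inv_inv, neg_comp, neg_neg, comp_assoc, ← mul_def, Units.inv_mul,
    one_def, comp_id]

lemma leftInvOn_closedLoopMap : LeftInvOn (closedLoopMap G) (closedLoopMap G) (wellPosed G) :=
  fun _ hK ↦ closedLoopMap_closedLoopMap hK

lemma closedLoopMap_smul (c : 𝕜) :
    closedLoopMap G (c • K) = c • -(K ∘L Ring.inverse (1 - G ∘L (c • K))) := by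
  rw [closedLoopMap, smul_comp, smul_neg]

lemma zero_mem_wellPosed : (0 : Y →L[𝕜] U) ∈ wellPosed G := by
  simp [wellPosed]

variable [CompleteSpace Y]

lemma isOpen_wellPosed : IsOpen (wellPosed G) :=
  Units.isOpen.preimage (by fun_prop)

/-- `h_G` has derivative `-I` at `0`. -/
lemma tendsto_inv_smul_closedLoopMap_smul (G : U →L[𝕜] Y) (J : Y →L[𝕜] U) :
    Tendsto (fun α : 𝕜 ↦ α⁻¹ • closedLoopMap G (α • J)) (𝓝[≠] 0) (𝓝 (-J)) := by
  have hinv : ContinuousAt (fun α : 𝕜 ↦ Ring.inverse (1 - G ∘L (α • J))) 0 := by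
    refine ContinuousAt.comp (g := Ring.inverse) ?_ (by fun_prop)
    simpa using NormedRing.inverse_continuousAt (1 : (Y →L[𝕜] Y)ˣ)
  have hcont : ContinuousAt (fun α : 𝕜 ↦ -(J ∘L Ring.inverse (1 - G ∘L (α • J)))) 0 :=
    ((compL 𝕜 Y Y U J).continuous.continuousAt.comp hinv).neg
  have hat0 : -(J ∘L Ring.inverse (1 - G ∘L ((0 : 𝕜) • J))) = -J := by
    rw [zero_smul, comp_zero, sub_zero, Ring.inverse_one, one_def, comp_id]
  refine (hat0 ▸ hcont.tendsto |>.mono_left nhdsWithin_le_nhds).congr' ?_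
  filter_upwards [self_mem_nhdsWithin] with α (hα : α ≠ 0)
  rw [closedLoopMap_smul, inv_smul_smul₀ hα]

end Feedback

section RealScalars

variable {U Y : Type*} [NormedAddCommGroup U] [NormedSpace ℝ U]
  [NormedAddCommGroup Y] [NormedSpace ℝ Y] [CompleteSpace Y]

lemma subset_of_subset_image_closedLoopMap {G : U →L[ℝ] Y} {S T : Set (Y →L[ℝ] U)}
    (hS : IsClosed S) (hShom : ∀ K ∈ S, ∀ α : ℝ, α • K ∈ S)
    (hTstar : ∀ v ∈ T, ∀ α ∈ Icc (0 : ℝ) 1, α • v ∈ T)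
    (him : T ∩ wellPosed G ⊆ closedLoopMap G '' (S ∩ wellPosed G)) : T ⊆ S := by
  intro J hJ
  have hsmall : ∀ᶠ α in 𝓝 (0 : ℝ), α • J ∈ wellPosed G := by
    have hcont : Tendsto (fun α : ℝ ↦ α • J) (𝓝 0) (𝓝 0) := by
      simpa using (tendsto_id (x := 𝓝 (0 : ℝ))).smul_const J
    exact hcont (isOpen_wellPosed.mem_nhds zero_mem_wellPosed)
  have hmem : ∀ᶠ α in 𝓝[>] (0 : ℝ), α⁻¹ • closedLoopMap G (α • J) ∈ S := by
    filter_upwards [nhdsWithin_le_nhds hsmall, Ioc_mem_nhdsGT one_pos] with α hαM hα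
    obtain ⟨K, ⟨hKS, hKM⟩, hKJ⟩ := him ⟨hTstar J hJ α ⟨hα.1.le, hα.2⟩, hαM⟩
    rw [← hKJ, closedLoopMap_closedLoopMap hKM]
    exact hShom K hKS α⁻¹
  have hlim : Tendsto (fun α : ℝ ↦ α⁻¹ • closedLoopMap G (α • J)) (𝓝[>] 0) (𝓝 (-J)) :=
    (tendsto_inv_smul_closedLoopMap_smul G J).mono_left (nhdsWithin_mono _ fun _ h ↦ ne_of_gt h)
  have hnegJ : -J ∈ S := hS.mem_of_tendsto hlim hmem
  simpa using hShom (-J) hnegJ (-1)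

end RealScalars

theorem stmt_10_general {U Y : Type*} [NormedAddCommGroup U] [NormedSpace ℝ U]
    [NormedAddCommGroup Y] [NormedSpace ℝ Y] [CompleteSpace Y]
    (G : U →L[ℝ] Y) (S : Set (Y →L[ℝ] U))
    (hSclosed : IsClosed S)
    (hShom : ∀ K ∈ S, ∀ α : ℝ, α • K ∈ S)
    (MG : Set (Y →L[ℝ] U)) (hMG : MG = {K | IsUnit (1 - G ∘L K)})
    (hG : (Y →L[ℝ] U) → (Y →L[ℝ] U))
    (hhG : hG = fun K => -(K ∘L Ring.inverse (1 - G ∘L K)))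
    (T : Set (Y →L[ℝ] U))
    (hTstar : ∀ v ∈ T, ∀ α ∈ Set.Icc (0 : ℝ) 1, α • v ∈ T)
    (him : hG '' (S ∩ MG) = T ∩ MG) :
    hG '' (S ∩ MG) = S ∩ MG := by
  change MG = wellPosed G at hMG
  change hG = closedLoopMap G at hhG
  subst hMG hhG
  have hTS : T ⊆ S :=
    subset_of_subset_image_closedLoopMap hSclosed hShom hTstar him.symm.subset
  have hsub : closedLoopMap G '' (S ∩ wellPosed G) ⊆ S ∩ wellPosed G :=
    him ▸ inter_subset_inter_left _ hTS
  refine hsub.antisymm ?_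
  calc S ∩ wellPosed G
      = closedLoopMap G '' (closedLoopMap G '' (S ∩ wellPosed G)) :=
        (leftInvOn_closedLoopMap.mono inter_subset_right).image_image.symm
    _ ⊆ closedLoopMap G '' (S ∩ wellPosed G) := image_mono hsub

/-- Theorem 3: if `S` is closed and homogeneous and `h_G(S ∩ M_G) = T ∩ M_G`
for some star-shaped set `T`, then `h_G(S ∩ M_G) = S ∩ M_G`. -/
theorem stmt_10 {U Y : Type*} [NormedAddCommGroup U] [NormedSpace ℝ U] [CompleteSpace U]
    [NormedAddCommGroup Y] [NormedSpace ℝ Y] [CompleteSpace Y]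
    (G : U →L[ℝ] Y) (S : Set (Y →L[ℝ] U))
    (hSclosed : IsClosed S)
    (hShom : ∀ K ∈ S, ∀ α : ℝ, α • K ∈ S)
    (MG : Set (Y →L[ℝ] U)) (hMG : MG = {K | IsUnit (1 - G ∘L K)})
    (hG : (Y →L[ℝ] U) → (Y →L[ℝ] U))
    (hhG : hG = fun K => -(K ∘L Ring.inverse (1 - G ∘L K)))
    (T : Set (Y →L[ℝ] U))
    (hTstar : ∀ v ∈ T, ∀ α ∈ Set.Icc (0 : ℝ) 1, α • v ∈ T)
    (him : hG '' (S ∩ MG) = T ∩ MG) :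
    hG '' (S ∩ MG) = S ∩ MG :=
  stmt_10_general G S hSclosed hShom MG hMG hG hhG T hTstar him
end

section
/- Let U = ℝⁿ, Y = ℝᵐ (finite dimensional), G an m×n real matrix, and S a linear subspace of n×m real matrices. Suppose h_G(S ∩ M_G) ⊆ S, where M_G = {K : I - GK invertible} and h_G(K) = -K(I-GK)⁻¹. Then S is quadratically invariant under G, i.e., KGK ∈ S for all K ∈ S. -/
/-!
Apply the hypothesis to `t • K` for small `t ≠ 0`: the resolvent identity turns
`-h_G (t • K) = t • K (1 - t G K)⁻¹` into `t • K + t² • K (1 - t G K)⁻¹ G K`, so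
`K (1 - t G K)⁻¹ G K ∈ S`. As `t → 0` these matrices tend to `K G K`, which lies in `S`
because a subspace of a finite-dimensional space is closed.
-/

open Filter Topology

namespace Matrix

variable {m n R : Type*} [Fintype m] [Fintype n] [DecidableEq m] [CommRing R]

theorem mul_inv_one_sub_mul_sub_self (G : Matrix m n R) (K : Matrix n m R)
    (h : IsUnit (1 - G * K)) : K * (1 - G * K)⁻¹ - K = K * (1 - G * K)⁻¹ * G * K := by
  have hdet : IsUnit (1 - G * K).det := (isUnit_iff_isUnit_det _).1 h
  calc K * (1 - G * K)⁻¹ - K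
      = K * ((1 - G * K)⁻¹ * (1 - (1 - G * K))) := by
        rw [Matrix.mul_sub (1 - G * K)⁻¹, nonsing_inv_mul _ hdet, Matrix.mul_sub, Matrix.mul_one,
          Matrix.mul_one]
    _ = K * (1 - G * K)⁻¹ * G * K := by
        simp only [sub_sub_cancel, Matrix.mul_assoc]

theorem mul_inv_one_sub_smul_mul_mem {𝕜 : Type*} [Field 𝕜] (G : Matrix m n 𝕜)
    {S : Submodule 𝕜 (Matrix n m 𝕜)}
    (hS : ∀ K ∈ S, IsUnit (1 - G * K) → -(K * (1 - G * K)⁻¹) ∈ S)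
    {K : Matrix n m 𝕜} (hK : K ∈ S) {t : 𝕜} (ht : t ≠ 0) (hu : IsUnit (1 - t • (G * K))) :
    K * (1 - t • (G * K))⁻¹ * G * K ∈ S := by
  have hu' : IsUnit (1 - G * (t • K)) := by rwa [Matrix.mul_smul]
  have hres := mul_inv_one_sub_mul_sub_self G (t • K) hu'
  have hh := hS (t • K) (S.smul_mem t hK) hu'
  rw [Matrix.mul_smul] at hres hh
  have hscaled : (t * t) • (K * (1 - t • (G * K))⁻¹ * G * K)
      = t • K * (1 - t • (G * K))⁻¹ - t • K := by
    rw [hres]; simp only [Matrix.smul_mul, Matrix.mul_smul, smul_smul]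
  rw [← S.smul_mem_iff (mul_ne_zero ht ht), hscaled]
  exact S.sub_mem (S.neg_mem_iff.mp hh) (S.smul_mem t hK)

theorem continuousAt_inv_one_sub_smul {𝕜 : Type*} [NormedField 𝕜] (A : Matrix m m 𝕜) :
    ContinuousAt (fun t : 𝕜 => (1 - t • A)⁻¹) 0 := by
  have hinv : ContinuousAt Inv.inv (1 - (0 : 𝕜) • A) := by
    apply continuousAt_matrix_inv
    rw [zero_smul, sub_zero, det_one, Ring.inverse_eq_inv']
    exact continuousAt_inv₀ one_ne_zero
  exact hinv.comp (f := fun t : 𝕜 => 1 - t • A) (by fun_prop)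

theorem eventually_isUnit_one_sub_smul {𝕜 : Type*} [NormedField 𝕜] (A : Matrix m m 𝕜) :
    ∀ᶠ t in 𝓝 (0 : 𝕜), IsUnit (1 - t • A) := by
  have hdet : ContinuousAt (fun t : 𝕜 => (1 - t • A).det) 0 := by fun_prop
  filter_upwards [hdet.eventually_ne (by simp : (1 - (0 : 𝕜) • A).det ≠ 0)] with t ht
  exact (isUnit_iff_isUnit_det _).2 (isUnit_iff_ne_zero.2 ht)

end Matrix

open Matrix

/-- If `h_G(S ∩ M_G) ⊆ S` for a subspace `S` of `n×m` real matrices, then `S`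
is quadratically invariant under `G`: `KGK ∈ S` for all `K ∈ S`. -/
theorem stmt_11 {m n : ℕ} (G : Matrix (Fin m) (Fin n) ℝ)
    (S : Submodule ℝ (Matrix (Fin n) (Fin m) ℝ))
    (hyp : ∀ K ∈ S, IsUnit (1 - G * K) → -(K * (1 - G * K)⁻¹) ∈ S) :
    ∀ K ∈ S, K * G * K ∈ S := by
  intro K hK
  have hmem : ∀ᶠ t in 𝓝[≠] (0 : ℝ), K * (1 - t • (G * K))⁻¹ * G * K ∈ S := by
    filter_upwards [nhdsWithin_le_nhds (eventually_isUnit_one_sub_smul (G * K)),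
      self_mem_nhdsWithin] with t hu ht
    exact mul_inv_one_sub_smul_mul_mem G hyp hK ht hu
  have hlim : Tendsto (fun t : ℝ => K * (1 - t • (G * K))⁻¹ * G * K) (𝓝[≠] 0)
      (𝓝 (K * G * K)) := by
    have hsandwich : Continuous fun X : Matrix (Fin m) (Fin m) ℝ => K * X * G * K := by fun_prop
    have hcont : ContinuousAt (fun t : ℝ => K * (1 - t • (G * K))⁻¹ * G * K) 0 :=
      hsandwich.continuousAt.comp (continuousAt_inv_one_sub_smul (G * K))
    simpa using hcont.tendsto.mono_left nhdsWithin_le_nhds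
  exact S.closed_of_finiteDimensional.mem_of_tendsto hlim hmem
end

section
/- Let G be an m×n real matrix and S a subspace of n×m real matrices that is quadratically invariant under G (KGK ∈ S for all K ∈ S). Then for every K ∈ S with ‖GK‖ < 1, the matrix h_G(K) = -K(I-GK)⁻¹ = -∑_{j≥0} K(GK)ʲ belongs to S. -/
/-!
Polarizing `K G K ∈ S` gives `K G L + L G K ∈ S` for `K, L ∈ S`. For `L = K (G K)ʲ` both terms
equal `K (G K)ʲ⁺¹`, so by induction every `K (G K)ʲ` lies in `S`. When `‖G K‖ < 1` the Neumann
series `∑ (G K)ʲ` converges to `(1 - G K)⁻¹`; the subspace `{X | K X ∈ S}` contains its terms and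
is closed, being finite-dimensional, so it contains the sum.
-/

open Matrix

attribute [local instance] Matrix.linftyOpNormedAddCommGroup Matrix.linftyOpNormedRing

def QuadInvariant {𝕜 m n : Type*} [Semiring 𝕜] [Fintype m] [Fintype n] (G : Matrix m n 𝕜)
    (S : Submodule 𝕜 (Matrix n m 𝕜)) : Prop :=
  ∀ K ∈ S, K * G * K ∈ S

namespace QuadInvariant

variable {𝕜 m n : Type*} [Fintype m] [Fintype n] {G : Matrix m n 𝕜}

section Algebraic

variable [Field 𝕜] {S : Submodule 𝕜 (Matrix n m 𝕜)} {K L : Matrix n m 𝕜}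

theorem mul_mul_add_mul_mul_mem (h : QuadInvariant G S) (hK : K ∈ S) (hL : L ∈ S) :
    K * G * L + L * G * K ∈ S := by
  have hpolar : K * G * L + L * G * K = (K + L) * G * (K + L) - K * G * K - L * G * L := by
    simp only [Matrix.add_mul, Matrix.mul_add]
    abel
  rw [hpolar]
  exact S.sub_mem (S.sub_mem (h _ (S.add_mem hK hL)) (h K hK)) (h L hL)

theorem mul_pow_mem [DecidableEq m] [NeZero (2 : 𝕜)] (h : QuadInvariant G S) (hK : K ∈ S)
    (j : ℕ) : K * (G * K) ^ j ∈ S := by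
  induction j with
  | zero => simpa using hK
  | succ j ih =>
    have hleft : K * G * (K * (G * K) ^ j) = K * (G * K) ^ (j + 1) := by
      simp only [pow_succ', Matrix.mul_assoc]
    have hright : K * (G * K) ^ j * G * K = K * (G * K) ^ (j + 1) := by
      simp only [pow_succ, Matrix.mul_assoc]
    have htwo := h.mul_mul_add_mul_mul_mem hK ih
    rw [hleft, hright, ← two_smul 𝕜] at htwo
    exact (S.smul_mem_iff two_ne_zero).mp htwo

end Algebraic

theorem mul_inv_one_sub_mem [DecidableEq m] [NontriviallyNormedField 𝕜] [CompleteSpace 𝕜]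
    [NeZero (2 : 𝕜)] {S : Submodule 𝕜 (Matrix n m 𝕜)} {K : Matrix n m 𝕜}
    (h : QuadInvariant G S) (hK : K ∈ S) (hGK : ‖G * K‖ < 1) :
    K * (1 - G * K)⁻¹ ∈ S := by
  have hclosed : IsClosed (S.comap (mulLeftLinearMap m 𝕜 K) : Set (Matrix m m 𝕜)) :=
    Submodule.closed_of_finiteDimensional _
  -- The uniformity of the `L∞` operator norm agrees with the product uniformity on matrices
  -- only up to unfolding, so instance search cannot transfer completeness on its own.
  have : HasSummableGeomSeries (Matrix m m 𝕜) := @instHasSummableGeomSeriesOfCompleteSpace _ _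
    (by exact (inferInstance : CompleteSpace (Matrix m m 𝕜)))
  rw [nonsing_inv_eq_ringInverse, ← geom_series_eq_inverse _ hGK]
  exact tsum_mem hclosed fun j ↦ h.mul_pow_mem hK j

end QuadInvariant

/-- If `S` is quadratically invariant under `G`, then for every `K ∈ S` with
`‖GK‖ < 1` (operator norm), `h_G(K) = -K(I-GK)⁻¹ ∈ S`. -/
theorem stmt_12 {m n : ℕ} (G : Matrix (Fin m) (Fin n) ℝ)
    (S : Submodule ℝ (Matrix (Fin n) (Fin m) ℝ))
    (hqi : ∀ K ∈ S, K * G * K ∈ S) :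
    ∀ K ∈ S, ‖G * K‖ < 1 → -(K * (1 - G * K)⁻¹) ∈ S :=
  fun _ hK hGK ↦ S.neg_mem (QuadInvariant.mul_inv_one_sub_mem hqi hK hGK)
end

section
/- Let G be an m×n real matrix and S a subspace of n×m matrices quadratically invariant under G. Then for all K ∈ S and all j ≥ 0, K(GK)ʲ ∈ S. -/
open Matrix

namespace Matrix

variable {m n R : Type*} [Fintype m] [Fintype n] [Ring R]

def QuadraticallyInvariant (G : Matrix m n R) (S : Submodule R (Matrix n m R)) : Prop :=
  ∀ K ∈ S, K * G * K ∈ S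

namespace QuadraticallyInvariant

variable {G : Matrix m n R} {S : Submodule R (Matrix n m R)}

theorem mul_mul_add_mul_mul_mem (hqi : QuadraticallyInvariant G S) {K₁ K₂ : Matrix n m R}
    (h₁ : K₁ ∈ S) (h₂ : K₂ ∈ S) : K₁ * G * K₂ + K₂ * G * K₁ ∈ S := by
  have polarization : (K₁ + K₂) * G * (K₁ + K₂) - K₁ * G * K₁ - K₂ * G * K₂
      = K₁ * G * K₂ + K₂ * G * K₁ := by
    simp only [Matrix.add_mul, Matrix.mul_add]
    abel
  rw [← polarization]
  exact S.sub_mem (S.sub_mem (hqi _ (S.add_mem h₁ h₂)) (hqi _ h₁)) (hqi _ h₂)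

theorem mul_pow_mem [DecidableEq m] [Invertible (2 : R)] (hqi : QuadraticallyInvariant G S)
    {K : Matrix n m R} (hK : K ∈ S) (j : ℕ) : K * (G * K) ^ j ∈ S := by
  induction j with
  | zero => simpa using hK
  | succ j ih =>
    have hleft : K * G * (K * (G * K) ^ j) = K * (G * K) ^ (j + 1) := by
      rw [Matrix.mul_assoc, ← Matrix.mul_assoc G, ← pow_succ']
    have hright : K * (G * K) ^ j * G * K = K * (G * K) ^ (j + 1) := by
      rw [pow_succ, Matrix.mul_assoc, Matrix.mul_assoc]
    -- Both polarization terms with `K₁ = K`, `K₂ = K (GK)ʲ` equal `K (GK)ʲ⁺¹`; halve their sum.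
    have htwo := S.smul_mem (⅟2 : R) (hqi.mul_mul_add_mul_mul_mem hK ih)
    rwa [hleft, hright, ← two_smul R, smul_smul, invOf_mul_self, one_smul] at htwo

end QuadraticallyInvariant

end Matrix

/-- If `S` is quadratically invariant under `G`, then `K(GK)ʲ ∈ S` for all
`K ∈ S` and all `j ≥ 0`. -/
theorem stmt_13 {m n : ℕ} (G : Matrix (Fin m) (Fin n) ℝ)
    (S : Submodule ℝ (Matrix (Fin n) (Fin m) ℝ))
    (hqi : ∀ K ∈ S, K * G * K ∈ S) :
    ∀ K ∈ S, ∀ j : ℕ, K * (G * K) ^ j ∈ S :=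
  fun _ hK j => QuadraticallyInvariant.mul_pow_mem hqi hK j
end

section
/- Let U, Y be Banach spaces, G ∈ L(U,Y), S ⊆ L(Y,U) a closed subspace with S ∩ M_G = S (i.e., I - GK invertible for every K ∈ S) and h_G(S) = S. Let W, Z be Banach spaces, P₁₁ ∈ L(W,Z), P₁₂ ∈ L(U,Z), P₂₁ ∈ L(W,Y). Then the set C = { P₁₁ - P₁₂·h_G(K)·P₂₁ : K ∈ S } is an affine subspace of L(W,Z), namely C = P₁₁ - P₁₂·S·P₂₁, and in particular C is convex. -/
/-!
Substituting `Q = h_G(K)`, which ranges over all of `S` because `h_G(S) = S`, exhibits `C` as the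
image of the subspace `S` under the affine map `Q ↦ P₁₁ - P₁₂ Q P₂₁`; affine images of convex
sets are convex.
-/

open ContinuousLinearMap

theorem Set.setOf_exists_mem_eq_comp_of_image_eq {α β : Type*} {f : α → α} {s : Set α}
    (hf : f '' s = s) (g : α → β) :
    {x | ∃ k ∈ s, x = g (f k)} = {x | ∃ k ∈ s, x = g k} := by
  ext x
  constructor
  · rintro ⟨k, hk, rfl⟩
    exact ⟨f k, hf ▸ Set.mem_image_of_mem f hk, rfl⟩
  · rintro ⟨k, hk, rfl⟩
    obtain ⟨j, hj, rfl⟩ : k ∈ f '' s := hf.symm ▸ hk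
    exact ⟨j, hj, rfl⟩

theorem Submodule.convex_setOf_const_sub_map {𝕜 E F : Type*} [Ring 𝕜] [PartialOrder 𝕜]
    [AddCommGroup E] [Module 𝕜 E] [AddCommGroup F] [Module 𝕜 F]
    (S : Submodule 𝕜 E) (f : E →ₗ[𝕜] F) (c : F) :
    Convex 𝕜 {y | ∃ x ∈ S, y = c - f x} := by
  have : {y | ∃ x ∈ S, y = c - f x} = (AffineMap.const 𝕜 E c - f.toAffineMap) '' S := by
    ext y
    simp [eq_comm]
  rw [this]
  exact S.convex.affine_image _

def ContinuousLinearMap.sandwich {R U Y W Z : Type*} [CommSemiring R]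
    [TopologicalSpace U] [AddCommMonoid U] [Module R U] [ContinuousAdd U] [ContinuousConstSMul R U]
    [TopologicalSpace Y] [AddCommMonoid Y] [Module R Y]
    [TopologicalSpace W] [AddCommMonoid W] [Module R W]
    [TopologicalSpace Z] [AddCommMonoid Z] [Module R Z] [ContinuousAdd Z] [ContinuousConstSMul R Z]
    (A : U →L[R] Z) (B : W →L[R] Y) : (Y →L[R] U) →ₗ[R] (W →L[R] Z) where
  toFun Q := (A ∘L Q) ∘L B
  map_add' Q Q' := by rw [comp_add, add_comp]
  map_smul' c Q := by rw [comp_smul, smul_comp]; rfl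

theorem stmt_17_general {U Y W Z : Type*}
    [NormedAddCommGroup U] [NormedSpace ℝ U]
    [NormedAddCommGroup Y] [NormedSpace ℝ Y]
    [NormedAddCommGroup W] [NormedSpace ℝ W]
    [NormedAddCommGroup Z] [NormedSpace ℝ Z]
    (S : Submodule ℝ (Y →L[ℝ] U))
    (hG : (Y →L[ℝ] U) → (Y →L[ℝ] U))
    (hinv : hG '' (S : Set (Y →L[ℝ] U)) = (S : Set (Y →L[ℝ] U)))
    (P11 : W →L[ℝ] Z) (P12 : U →L[ℝ] Z) (P21 : W →L[ℝ] Y)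
    (C : Set (W →L[ℝ] Z))
    (hC : C = {X | ∃ K ∈ S, X = P11 - (P12 ∘L hG K) ∘L P21}) :
    C = {X | ∃ Q ∈ S, X = P11 - (P12 ∘L Q) ∘L P21} ∧ Convex ℝ C := by
  have hCeq : C = {X | ∃ Q ∈ S, X = P11 - (P12 ∘L Q) ∘L P21} :=
    hC.trans (Set.setOf_exists_mem_eq_comp_of_image_eq hinv fun Q => P11 - (P12 ∘L Q) ∘L P21)
  exact ⟨hCeq, hCeq ▸ S.convex_setOf_const_sub_map (P12.sandwich P21) P11⟩

/-- If `S` is a closed subspace with `S ∩ M_G = S` and `h_G(S) = S`, then the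
set of achievable closed-loop maps `C = {P₁₁ - P₁₂·h_G(K)·P₂₁ : K ∈ S}` equals
the affine set `P₁₁ - P₁₂·S·P₂₁`, and in particular `C` is convex. -/
theorem stmt_17 {U Y W Z : Type*}
    [NormedAddCommGroup U] [NormedSpace ℝ U] [CompleteSpace U]
    [NormedAddCommGroup Y] [NormedSpace ℝ Y] [CompleteSpace Y]
    [NormedAddCommGroup W] [NormedSpace ℝ W] [CompleteSpace W]
    [NormedAddCommGroup Z] [NormedSpace ℝ Z] [CompleteSpace Z]
    (G : U →L[ℝ] Y) (S : Submodule ℝ (Y →L[ℝ] U))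
    (hSclosed : IsClosed (S : Set (Y →L[ℝ] U)))
    (hSM : ∀ K ∈ S, IsUnit (1 - G ∘L K))
    (hG : (Y →L[ℝ] U) → (Y →L[ℝ] U))
    (hhG : hG = fun K => -(K ∘L Ring.inverse (1 - G ∘L K)))
    (hinv : hG '' (S : Set (Y →L[ℝ] U)) = (S : Set (Y →L[ℝ] U)))
    (P11 : W →L[ℝ] Z) (P12 : U →L[ℝ] Z) (P21 : W →L[ℝ] Y)
    (C : Set (W →L[ℝ] Z))
    (hC : C = {X | ∃ K ∈ S, X = P11 - (P12 ∘L hG K) ∘L P21}) :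
    C = {X | ∃ Q ∈ S, X = P11 - (P12 ∘L Q) ∘L P21} ∧ Convex ℝ C :=
  stmt_17_general S hG hinv P11 P12 P21 C hC
end

section
/- Let G be an m×n real matrix and S a subspace of n×m real matrices such that I - GK is invertible for all K ∈ S. Then the following are equivalent: (i) KGK ∈ S for all K ∈ S; (ii) h_G(S) = S, where h_G(K) = -K(I-GK)⁻¹. -/
/-!
Quadratic invariance makes `S` stable under `K ↦ K * (G * K) ^ p`, by polarizing
`K ↦ K * G * K`; hence `K * X ∈ S` for every `X` in the algebra generated by `G * K`, which
(being finite-dimensional) contains `(1 - G * K)⁻¹`. So `h_G` maps `S` into `S`, and since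
`h_G` is an involution wherever it is defined, onto `S`. Conversely,
`tK + h_G(tK) = -t² KGK (1 - tGK)⁻¹`, so `KGK (1 - tGK)⁻¹ ∈ S` for `t ≠ 0`, and `S` is closed.
-/

open Filter Topology nonZeroDivisors

theorem Subalgebra.ringInverse_mem {𝕜 A : Type*} [Field 𝕜] [Ring A] [Algebra 𝕜 A]
    {B : Subalgebra 𝕜 A} [FiniteDimensional 𝕜 B] {x : A} (hx : x ∈ B) :
    Ring.inverse x ∈ B := by
  by_cases hu : IsUnit x
  · have : IsArtinianRing B := isArtinian_of_tower 𝕜 inferInstance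
    have hreg : (⟨x, hx⟩ : B) ∈ B⁰ := comap_nonZeroDivisors_le_of_injective
      (f := B.val) Subtype.val_injective hu.mem_nonZeroDivisors
    obtain ⟨u, hux⟩ := IsArtinianRing.isUnit_of_mem_nonZeroDivisors hreg
    have hx : x = (Units.map B.val.toMonoidHom u : A) := by simp [hux]
    rw [hx, Ring.inverse_unit, ← map_inv]
    exact (u⁻¹).val.2
  · rw [Ring.inverse_non_unit x hu]
    exact B.zero_mem

namespace Matrix

variable {l m n R 𝕜 : Type*} [Fintype m] [Fintype n]

section QuadraticInvariance

variable [Field 𝕜] {G : Matrix m n 𝕜} {S : Submodule 𝕜 (Matrix n m 𝕜)} {K : Matrix n m 𝕜}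

theorem mul_mul_add_mul_mul_mem (hQI : ∀ K ∈ S, K * G * K ∈ S) {L : Matrix n m 𝕜}
    (hK : K ∈ S) (hL : L ∈ S) : K * G * L + L * G * K ∈ S := by
  have h := S.sub_mem (S.sub_mem (hQI _ (S.add_mem hK hL)) (hQI K hK)) (hQI L hL)
  convert h using 1
  simp only [Matrix.add_mul, Matrix.mul_add]
  abel

variable [DecidableEq m]

theorem mul_mul_pow_mem [NeZero (2 : 𝕜)] (hQI : ∀ K ∈ S, K * G * K ∈ S) (hK : K ∈ S)
    (p : ℕ) : K * (G * K) ^ p ∈ S := by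
  induction p with
  | zero => simpa using hK
  | succ p ih =>
    have h := mul_mul_add_mul_mul_mem hQI ih hK
    have e1 : K * (G * K) ^ p * G * K = K * (G * K) ^ (p + 1) := by
      rw [pow_succ]; simp only [Matrix.mul_assoc]
    have e2 : K * G * (K * (G * K) ^ p) = K * (G * K) ^ (p + 1) := by
      rw [pow_succ']; simp only [Matrix.mul_assoc]
    rwa [e1, e2, ← two_smul 𝕜, S.smul_mem_iff two_ne_zero] at h

theorem mul_mem_of_mem_adjoin [NeZero (2 : 𝕜)] (hQI : ∀ K ∈ S, K * G * K ∈ S) (hK : K ∈ S)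
    {X : Matrix m m 𝕜} (hX : X ∈ Algebra.adjoin 𝕜 {G * K}) : K * X ∈ S := by
  suffices Subalgebra.toSubmodule (Algebra.adjoin 𝕜 {G * K}) ≤ S.comap (mulLeftLinearMap m 𝕜 K)
    from this hX
  rw [Algebra.adjoin_eq_span, Submodule.span_le]
  rintro _ hX
  obtain ⟨p, rfl⟩ := Submonoid.mem_closure_singleton.mp hX
  exact mul_mul_pow_mem hQI hK p

end QuadraticInvariance

variable [DecidableEq m]

theorem nonsing_inv_mem_adjoin_singleton [Field 𝕜] (A : Matrix m m 𝕜) :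
    A⁻¹ ∈ Algebra.adjoin 𝕜 {A} := by
  rw [nonsing_inv_eq_ringInverse]
  exact Subalgebra.ringInverse_mem (Algebra.self_mem_adjoin_singleton 𝕜 A)

/-- The map `h_G` of the quadratic invariance theorem. -/
noncomputable def closedLoopMap [CommRing R] (G : Matrix m n R) (K : Matrix n m R) :
    Matrix n m R :=
  -(K * (1 - G * K)⁻¹)

section CommRing

variable [CommRing R] {G : Matrix m n R} {K : Matrix n m R}

theorem closedLoopMap_closedLoopMap (h : IsUnit (1 - G * K)) :
    closedLoopMap G (closedLoopMap G K) = K := by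
  have hdet := (isUnit_iff_isUnit_det _).mp h
  have hinv : 1 - G * closedLoopMap G K = (1 - G * K)⁻¹ := by
    calc 1 - G * closedLoopMap G K = ((1 - G * K) + G * K) * (1 - G * K)⁻¹ := by
          rw [closedLoopMap, Matrix.add_mul, mul_nonsing_inv _ hdet, Matrix.mul_neg,
            Matrix.mul_assoc, sub_neg_eq_add]
      _ = (1 - G * K)⁻¹ := by rw [sub_add_cancel, Matrix.one_mul]
  rw [closedLoopMap, hinv, nonsing_inv_nonsing_inv _ hdet, closedLoopMap, Matrix.neg_mul,
    neg_neg, Matrix.mul_assoc, nonsing_inv_mul _ hdet, Matrix.mul_one]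

theorem add_closedLoopMap (h : IsUnit (1 - G * K)) :
    K + closedLoopMap G K = -(K * G * K * (1 - G * K)⁻¹) := by
  have hdet := (isUnit_iff_isUnit_det _).mp h
  calc K + closedLoopMap G K = (K * (1 - G * K) - K) * (1 - G * K)⁻¹ := by
        rw [Matrix.sub_mul, Matrix.mul_assoc, mul_nonsing_inv _ hdet, Matrix.mul_one,
          closedLoopMap, ← sub_eq_add_neg]
    _ = -(K * G * K * (1 - G * K)⁻¹) := by
        rw [Matrix.mul_sub, Matrix.mul_one, sub_sub_cancel_left, Matrix.neg_mul]
        simp only [Matrix.mul_assoc]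

end CommRing

section Field

variable [Field 𝕜] [NeZero (2 : 𝕜)] {G : Matrix m n 𝕜} {S : Submodule 𝕜 (Matrix n m 𝕜)}

theorem closedLoopMap_mem (hQI : ∀ K ∈ S, K * G * K ∈ S) {K : Matrix n m 𝕜} (hK : K ∈ S) :
    closedLoopMap G K ∈ S := by
  have hsub : Algebra.adjoin 𝕜 {1 - G * K} ≤ Algebra.adjoin 𝕜 {G * K} :=
    Algebra.adjoin_le <| Set.singleton_subset_iff.mpr <|
      sub_mem (one_mem _) (Algebra.self_mem_adjoin_singleton 𝕜 _)
  exact S.neg_mem (mul_mem_of_mem_adjoin hQI hK (hsub (nonsing_inv_mem_adjoin_singleton _)))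

theorem image_closedLoopMap_eq (hQI : ∀ K ∈ S, K * G * K ∈ S)
    (hinv : ∀ K ∈ S, IsUnit (1 - G * K)) : closedLoopMap G '' S = S :=
  (Set.image_subset_iff.mpr fun _ hK ↦ closedLoopMap_mem hQI hK).antisymm fun K hK ↦
    ⟨closedLoopMap G K, closedLoopMap_mem hQI hK, closedLoopMap_closedLoopMap (hinv K hK)⟩

end Field

theorem tendsto_mul_one_sub_smul_inv [NontriviallyNormedField 𝕜] (A : Matrix l m 𝕜)
    (B : Matrix m m 𝕜) : Tendsto (fun t : 𝕜 ↦ A * (1 - t • B)⁻¹) (𝓝[≠] 0) (𝓝 A) := by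
  have hinv : ContinuousAt Inv.inv (1 : Matrix m m 𝕜) :=
    continuousAt_matrix_inv _ (by simp [Ring.inverse_eq_inv'])
  have : ContinuousAt (fun t : 𝕜 ↦ A * (1 - t • B)⁻¹) 0 :=
    (continuous_const.matrix_mul continuous_id).continuousAt.comp
      (hinv.comp_of_eq (by fun_prop) (by simp))
  simpa using this.tendsto.mono_left nhdsWithin_le_nhds

theorem mul_mul_mem_of_mapsTo_closedLoopMap [NontriviallyNormedField 𝕜] [CompleteSpace 𝕜]
    {G : Matrix m n 𝕜} {S : Submodule 𝕜 (Matrix n m 𝕜)} (hS : Set.MapsTo (closedLoopMap G) S S)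
    (hinv : ∀ K ∈ S, IsUnit (1 - G * K)) {K : Matrix n m 𝕜} (hK : K ∈ S) : K * G * K ∈ S := by
  have hmem : ∀ t : 𝕜, t ≠ 0 → K * G * K * (1 - t • (G * K))⁻¹ ∈ S := by
    intro t ht
    have htK := S.smul_mem t hK
    have h := S.add_mem htK (hS htK)
    have e : t • K * G * (t • K) * (1 - G * (t • K))⁻¹ =
        (t * t) • (K * G * K * (1 - t • (G * K))⁻¹) := by
      simp only [Matrix.mul_smul, Matrix.smul_mul, smul_smul]
    rwa [add_closedLoopMap (hinv _ htK), S.neg_mem_iff, e,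
      S.smul_mem_iff (mul_ne_zero ht ht)] at h
  exact S.closed_of_finiteDimensional.mem_of_tendsto (tendsto_mul_one_sub_smul_inv _ _)
    (eventually_nhdsWithin_of_forall hmem)

end Matrix

open Matrix

/-- Finite-dimensional quadratic invariance theorem: if `I - GK` is invertible
for all `K` in the subspace `S`, then `S` is quadratically invariant under `G`
if and only if `h_G(S) = S`, where `h_G(K) = -K(I-GK)⁻¹`. -/
theorem stmt_19 {m n : ℕ} (G : Matrix (Fin m) (Fin n) ℝ)
    (S : Submodule ℝ (Matrix (Fin n) (Fin m) ℝ))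
    (hinv : ∀ K ∈ S, IsUnit (1 - G * K)) :
    (∀ K ∈ S, K * G * K ∈ S) ↔
      (fun K : Matrix (Fin n) (Fin m) ℝ => -(K * (1 - G * K)⁻¹)) '' (S : Set (Matrix (Fin n) (Fin m) ℝ)) =
        (S : Set (Matrix (Fin n) (Fin m) ℝ)) := by
  change _ ↔ closedLoopMap G '' S = S
  refine ⟨fun hQI ↦ image_closedLoopMap_eq hQI hinv, fun hS K hK ↦ ?_⟩
  exact mul_mul_mem_of_mapsTo_closedLoopMap (Set.mapsTo_iff_image_subset.mpr hS.subset) hinv hK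
end
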